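/- The λ⁻-braiding relation is symmetric: if families (x_i)_{i∈κ} and (y_j)_{j∈κ} over a λ⁻-monoid X are λ⁻-braided, then (y_j)_{j∈κ} and (x_i)_{i∈κ} are λ⁻-braided. -/

import Mathlib

open scoped Classical

universe u v w

/-- A κ-monoid (Definition 2.1 of the paper), with the index cardinal κ modelled
by an (infinite) index type `ι`.  `base` plays the role of the element `0 ∈ κ`. -/
structure KappaMonoid (ι : Type u) (H : Type v) where
  zero : H
  base : ι
  sum : (ι → H) → H
  /-- (A1) -/
  sum_single : ∀ x : ι → H, (∀ i, i ≠ base → x i = zero) → sum x = x base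
  /-- (A2) -/
  sum_flatten : ∀ (x : ι × ι → H) (π : ι × ι ≃ ι),
    sum (fun i => sum fun j => x (i, j)) = sum fun k => x (π.symm k)

namespace KappaMonoid

variable {ι : Type u} {H : Type v}

/-- The family with value `a` at `i`, `b` at `j`, and `0` elsewhere. -/
noncomputable def pairFam (M : KappaMonoid ι H) (i j : ι) (a b : H) : ι → H :=
  fun k => if k = i then a else if k = j then b else M.zero

/-- The induced binary addition `a + b` on a κ-monoid. -/
noncomputable def add [Nontrivial ι] (M : KappaMonoid ι H) (a b : H) : H :=
  M.sum (M.pairFam M.base (Classical.choose (exists_ne M.base)) a b)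

/-- `α·a`, where the cardinal `α` is realized as the cardinality of `s ⊆ ι`:
the κ-sum of the family equal to `a` on `s` and `0` elsewhere. -/
noncomputable def smulSet (M : KappaMonoid ι H) (s : Set ι) (a : H) : H :=
  M.sum fun i => if i ∈ s then a else M.zero

/-- The κ-sum of the subfamily of `x` supported on `s` (padding by `0`). -/
noncomputable def sumOn (M : KappaMonoid ι H) (s : Set ι) (x : ι → H) : H :=
  M.sum fun i => if i ∈ s then x i else M.zero

end KappaMonoid
/-- A limit element of the well-order (the minimum counts as a limit element). -/
def IsLimitElt {ι : Type u} [Preorder ι] [SuccOrder ι] (μ : ι) : Prop :=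
  ¬ ∃ ν, ν < μ ∧ Order.succ ν = μ

/-- An indexed partition of the index set `ι` (blocks may be empty). -/
def IsIndexedPartition {ι : Type u} (I : ι → Set ι) : Prop :=
  (∀ μ ν, μ ≠ ν → Disjoint (I μ) (I ν)) ∧ (⋃ μ, I μ) = Set.univ

namespace KappaMonoid
variable {ι : Type u} {H : Type v}

/-- Definition 3.1(1): the families `x` and `y`, with entries in the λ⁻-submonoid
`X ⊆ H`, are λ⁻-braided: there are indexed partitions `(I_μ)`, `(J_μ)` of `ι` with
blocks of cardinality `< λ` and braiding families `(u_μ)`, `(v_μ)` in `X` with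
`v_μ = 0` at limit elements, such that `Σ_{i∈I_μ} x_i = v_μ + u_μ` and
`Σ_{j∈J_μ} y_j = v_{μ+1} + u_μ` for all `μ`. -/
noncomputable def Braided [Infinite ι] [LinearOrder ι] [SuccOrder ι]
    (M : KappaMonoid ι H) (lam : Cardinal.{u}) (X : Set H) (x y : ι → H) : Prop :=
  ∃ (I J : ι → Set ι) (u v : ι → H),
    IsIndexedPartition I ∧ IsIndexedPartition J ∧
    (∀ μ, Cardinal.mk (I μ) < lam) ∧ (∀ μ, Cardinal.mk (J μ) < lam) ∧
    (∀ μ, u μ ∈ X) ∧ (∀ μ, v μ ∈ X) ∧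
    (∀ μ, IsLimitElt μ → v μ = M.zero) ∧
    (∀ μ, M.sumOn (I μ) x = M.add (v μ) (u μ)) ∧
    (∀ μ, M.sumOn (J μ) y = M.add (v (Order.succ μ)) (u μ))

/-- `X` is a λ⁻-submonoid of the κ-monoid `H`: it contains `0` and is closed under
sums of families with support of cardinality `< λ`. -/
def IsSubmonoidLT (M : KappaMonoid ι H) (lam : Cardinal.{u}) (X : Set H) : Prop :=
  M.zero ∈ X ∧ ∀ x : ι → H, (∀ i, x i ∈ X) →
    Cardinal.mk {i | x i ≠ M.zero} < lam → M.sum x ∈ X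

/-- Definition 3.1(2): the κ-monoid `H` is λ⁻-braided over `X`: `X` generates `H`
as a κ-monoid, and any two κ-indexed families in `X` with equal κ-sums are
λ⁻-braided. -/
noncomputable def BraidedOver [Infinite ι] [LinearOrder ι] [SuccOrder ι]
    (M : KappaMonoid ι H) (lam : Cardinal.{u}) (X : Set H) : Prop :=
  (∀ h : H, ∃ x : ι → H, (∀ i, x i ∈ X) ∧ M.sum x = h) ∧
  ∀ x y : ι → H, (∀ i, x i ∈ X) → (∀ i, y i ∈ X) →
    M.sum x = M.sum y → M.Braided lam X x y

end KappaMonoid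

/-! The braiding is a zigzag `v₀ u₀ v₁ u₁ …` in which the block `I_μ` of `x` covers
`v_μ + u_μ` and the block `J_μ` of `y` covers `u_μ + v_{μ+1}`. Read from the `y` side the
same zigzag braids `y` with `x`, except at a limit `μ`, where `J_μ` does not start with
`v_μ = 0`: there the blocks `I_μ` and `I_{μ+1}` of `x` are merged and `J_μ` is read as
`0 + (u_μ + v_{μ+1})`.

Besides this bookkeeping one only needs that the induced addition of a κ-monoid is
commutative and associative with unit `0`, and that sums over disjoint unions split. All of
this follows from (A2), since it makes iterated sums invariant under permutations of `κ × κ`. -/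

open Cardinal

namespace KappaMonoid

variable {ι : Type u} {H : Type v} (M : KappaMonoid ι H)

theorem sum_const_zero : M.sum (fun _ => M.zero) = M.zero :=
  M.sum_single _ fun _ _ => rfl

theorem sum_sum_ite_base (y : ι → H) :
    M.sum (fun i => M.sum fun j => if i = M.base then y j else M.zero) = M.sum y := by
  rw [M.sum_single _ fun i hi => by simp only [if_neg hi, sum_const_zero]]
  simp

variable [Infinite ι]

theorem sum_sum_comp_perm (z : ι × ι → H) (σ : Equiv.Perm (ι × ι)) :
    M.sum (fun i => M.sum fun j => z (σ (i, j))) = M.sum (fun i => M.sum fun j => z (i, j)) := by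
  obtain ⟨π⟩ : Nonempty (ι × ι ≃ ι) := Cardinal.eq.mp <| by
    simp [Cardinal.mul_eq_self (Cardinal.aleph0_le_mk ι)]
  rw [M.sum_flatten (fun p => z (σ p)) π, M.sum_flatten z (σ.symm.trans π)]
  rfl

theorem sum_comm (z : ι → ι → H) :
    M.sum (fun i => M.sum fun j => z i j) = M.sum (fun j => M.sum fun i => z i j) :=
  M.sum_sum_comp_perm (fun p => z p.2 p.1) (Equiv.prodComm ι ι)

theorem sum_comp_perm (x : ι → H) (σ : Equiv.Perm ι) : M.sum (fun i => x (σ i)) = M.sum x :=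
  calc M.sum (fun i => x (σ i))
      = M.sum (fun i => M.sum fun j => if i = M.base then x (σ j) else M.zero) :=
        (M.sum_sum_ite_base _).symm
    _ = M.sum (fun i => M.sum fun j => if i = M.base then x j else M.zero) :=
        M.sum_sum_comp_perm (fun p => if p.1 = M.base then x p.2 else M.zero)
          (Equiv.prodCongr (Equiv.refl ι) σ)
    _ = M.sum x := M.sum_sum_ite_base x

noncomputable def secondIdx : ι := Classical.choose (exists_ne M.base)

theorem secondIdx_ne_base : M.secondIdx ≠ M.base := Classical.choose_spec (exists_ne M.base)

theorem sum_pairFam (a b : H) : M.sum (M.pairFam M.base M.secondIdx a b) = M.add a b :=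
  rfl

theorem add_zero (a : H) : M.add a M.zero = a := by
  rw [← sum_pairFam, M.sum_single _ fun i hi => by simp [pairFam, hi]]
  simp [pairFam]

theorem add_comm (a b : H) : M.add a b = M.add b a := by
  have hc := M.secondIdx_ne_base
  rw [← sum_pairFam, ← sum_pairFam, ← M.sum_comp_perm _ (Equiv.swap M.base M.secondIdx)]
  congr 1
  funext k
  by_cases hkb : k = M.base
  · simp [pairFam, hkb, hc]
  by_cases hkc : k = M.secondIdx
  · simp [pairFam, hkc, hc]
  · simp [pairFam, hkb, hkc, Equiv.swap_apply_of_ne_of_ne]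

theorem zero_add (a : H) : M.add M.zero a = a := by
  rw [M.add_comm, M.add_zero]

theorem sum_add_distrib (f g : ι → H) :
    M.sum (fun k => M.add (f k) (g k)) = M.add (M.sum f) (M.sum g) := by
  calc M.sum (fun k => M.add (f k) (g k))
      = M.sum (fun k => M.sum fun i => M.pairFam M.base M.secondIdx (f k) (g k) i) := rfl
    _ = M.sum (fun i => M.sum fun k => M.pairFam M.base M.secondIdx (f k) (g k) i) :=
        (M.sum_comm _).symm
    _ = M.sum (M.pairFam M.base M.secondIdx (M.sum f) (M.sum g)) := by
      congr 1
      funext i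
      unfold pairFam
      split_ifs
      exacts [rfl, rfl, M.sum_const_zero]

theorem add_pairFam (i j k : ι) (a b a' b' : H) :
    M.add (M.pairFam i j a b k) (M.pairFam i j a' b' k) =
      M.pairFam i j (M.add a a') (M.add b b') k := by
  unfold pairFam
  split_ifs
  exacts [rfl, rfl, M.add_zero _]

theorem add_right_comm (a b d : H) : M.add (M.add a b) d = M.add (M.add a d) b := by
  have h := M.sum_add_distrib (M.pairFam M.base M.secondIdx a b)
    (M.pairFam M.base M.secondIdx d M.zero)
  simp only [add_pairFam, sum_pairFam, add_zero] at h
  exact h.symm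

instance : Std.Commutative M.add := ⟨M.add_comm⟩

instance : Std.Associative M.add := ⟨fun a b d => by
  rw [M.add_comm a, M.add_right_comm, M.add_comm b, M.add_comm]⟩

theorem sumOn_union (x : ι → H) {s t : Set ι} (hst : Disjoint s t) :
    M.sumOn (s ∪ t) x = M.add (M.sumOn s x) (M.sumOn t x) := by
  rw [sumOn, sumOn, sumOn, ← sum_add_distrib]
  congr 1
  funext i
  by_cases his : i ∈ s
  · simp [his, Set.disjoint_left.mp hst his, add_zero]
  · by_cases hit : i ∈ t <;> simp [his, hit, zero_add, add_zero]

variable {M} in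
theorem IsSubmonoidLT.add_mem {lam : Cardinal.{u}} {X : Set H} (hX : M.IsSubmonoidLT lam X)
    (hlam : 2 < lam) {a b : H} (ha : a ∈ X) (hb : b ∈ X) : M.add a b ∈ X := by
  refine hX.2 _ (fun i => ?_) ?_
  · unfold pairFam
    split_ifs
    exacts [ha, hb, hX.1]
  · have hsupp : {i | M.pairFam M.base M.secondIdx a b i ≠ M.zero} ⊆ {M.base, M.secondIdx} := by
      intro i hi
      by_contra hic
      simp only [Set.mem_insert_iff, Set.mem_singleton_iff, not_or] at hic
      exact hi (by simp [pairFam, hic.1, hic.2])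
    calc #{i | M.pairFam M.base M.secondIdx a b i ≠ M.zero}
        ≤ #({M.base, M.secondIdx} : Set ι) := mk_le_mk_of_subset hsupp
      _ ≤ #({M.secondIdx} : Set ι) + 1 := mk_insert_le
      _ = 2 := by rw [mk_singleton, one_add_one_eq_two]
      _ < lam := hlam

end KappaMonoid

section LimitBlocks

variable {ι : Type u} [LinearOrder ι] [SuccOrder ι]

def mergeLimitBlocks (I : ι → Set ι) (μ : ι) : Set ι :=
  (if IsLimitElt μ then I μ else ∅) ∪ I (Order.succ μ)

theorem mk_mergeLimitBlocks_lt {I : ι → Set ι} {lam : Cardinal.{u}} (hlam : ℵ₀ ≤ lam)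
    (hI : ∀ μ, #(I μ) < lam) (μ : ι) : #(mergeLimitBlocks I μ) < lam := by
  refine (mk_le_mk_of_subset ?_).trans_lt <|
    (mk_union_le _ _).trans_lt (add_lt_of_lt hlam (hI μ) (hI (Order.succ μ)))
  unfold mergeLimitBlocks
  split_ifs
  exacts [subset_rfl, Set.union_subset_union_left _ (Set.empty_subset _)]

variable [NoMaxOrder ι]

theorem IsLimitElt.succ_ne {μ : ι} (h : IsLimitElt μ) (ν : ι) : Order.succ ν ≠ μ :=
  fun he => h ⟨ν, he ▸ Order.lt_succ ν, he⟩

theorem not_isLimitElt_succ (μ : ι) : ¬ IsLimitElt (Order.succ μ) :=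
  fun h => h.succ_ne μ rfl

theorem IsIndexedPartition.mergeLimitBlocks {I : ι → Set ι} (hI : IsIndexedPartition I) :
    IsIndexedPartition (mergeLimitBlocks I) := by
  have hsucc {μ ν : ι} (h : μ ≠ ν) : Disjoint (I (Order.succ μ)) (I (Order.succ ν)) :=
    hI.1 _ _ (Order.succ_injective.ne h)
  have hlim {μ : ι} (hμ : IsLimitElt μ) (ν : ι) : Disjoint (I μ) (I (Order.succ ν)) :=
    hI.1 _ _ (hμ.succ_ne ν).symm
  refine ⟨fun μ ν hμν => ?_, Set.eq_univ_of_forall fun k => ?_⟩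
  · unfold _root_.mergeLimitBlocks
    refine Disjoint.union_left (Disjoint.union_right ?_ ?_) (Disjoint.union_right ?_ (hsucc hμν))
    · split_ifs with hμ hν
      exacts [hI.1 _ _ hμν, Set.disjoint_empty _, Set.empty_disjoint _, Set.empty_disjoint _]
    · split_ifs with hμ
      exacts [hlim hμ ν, Set.empty_disjoint _]
    · split_ifs with hν
      exacts [(hlim hν μ).symm, Set.disjoint_empty _]
  · obtain ⟨ρ, hkρ⟩ := Set.mem_iUnion.mp (hI.2 ▸ Set.mem_univ k)
    rw [Set.mem_iUnion]
    by_cases hρ : IsLimitElt ρ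
    · exact ⟨ρ, Or.inl (by simpa [hρ] using hkρ)⟩
    · obtain ⟨σ, -, rfl⟩ := not_not.mp hρ
      exact ⟨σ, Or.inr hkρ⟩

end LimitBlocks

theorem braided_symm_general {ι : Type u} {H : Type v} [Infinite ι] [LinearOrder ι]
    [SuccOrder ι] [NoMaxOrder ι]
    (M : KappaMonoid ι H) (lam : Cardinal.{u}) (hreg : lam.IsRegular)
    (X : Set H) (hX : M.IsSubmonoidLT lam X)
    (x y : ι → H)
    (hbr : M.Braided lam X x y) :
    M.Braided lam X y x := by
  obtain ⟨I, J, u, v, hI, hJ, hIc, hJc, hu, hv, hvlim, hIx, hJy⟩ := hbr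
  refine ⟨J, mergeLimitBlocks I,
    fun μ => if IsLimitElt μ then M.add (u μ) (v (Order.succ μ)) else v (Order.succ μ),
    fun μ => if IsLimitElt μ then M.zero else u μ,
    hJ, hI.mergeLimitBlocks, hJc, mk_mergeLimitBlocks_lt hreg.aleph0_le hIc,
    fun μ => ?_, fun μ => ?_, fun μ hμ => if_pos hμ, fun μ => ?_, fun μ => ?_⟩
  all_goals beta_reduce
  · split_ifs
    exacts [hX.add_mem (ofNat_lt_aleph0.trans_le hreg.aleph0_le) (hu μ) (hv _), hv _]
  · split_ifs
    exacts [hX.1, hu μ]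
  · rw [hJy]
    split_ifs
    · rw [M.zero_add, M.add_comm]
    · rw [M.add_comm]
  · rw [if_neg (not_isLimitElt_succ μ)]
    by_cases hμ : IsLimitElt μ
    · rw [mergeLimitBlocks, if_pos hμ, if_pos hμ,
        M.sumOn_union x (hI.1 _ _ (Order.lt_succ μ).ne), hIx, hIx, hvlim μ hμ, M.zero_add]
      ac_rfl
    · rw [mergeLimitBlocks, if_neg hμ, if_neg hμ, Set.empty_union, hIx, M.add_comm]

/-- Lemma 3.7(2) (symmetry): the λ⁻-braiding relation on κ-indexed families over a
λ⁻-(sub)monoid `X` is symmetric. -/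
theorem braided_symm {ι : Type u} {H : Type v} [Infinite ι] [LinearOrder ι]
    [SuccOrder ι] [NoMaxOrder ι] [WellFoundedLT ι]
    (M : KappaMonoid ι H) (lam : Cardinal.{u}) (hreg : lam.IsRegular)
    (X : Set H) (hX : M.IsSubmonoidLT lam X)
    (x y : ι → H) (hx : ∀ i, x i ∈ X) (hy : ∀ i, y i ∈ X)
    (hbr : M.Braided lam X x y) :
    M.Braided lam X y x :=
  braided_symm_general M lam hreg X hX x y hbr
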